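/- Finite-time decorrelation of transport observables: for any function A: {0,1}^L × {0,1}^L → ℝ of two successive states, any t ≥ 0 and any τ ≥ L+1, in the stationary process of the DSS one has E[A(z^t, z^{t+1}) A(z^{t+τ}, z^{t+τ+1})] = E[A(z^t, z^{t+1})] · E[A(z^{t+τ}, z^{t+τ+1})]. -/

import Mathlib

namespace DSS

/-- A state of the DSS on `L` sites: a stable field `z : Fin L → Bool` together with a
finite multiset `w` of waiting particles (particles past site `L` have left the system). -/
structure State (L : ℕ) where
  z : Fin L → Bool
  w : Multiset (Fin L)

variable {L : ℕ}

/-- The multiset holding the right neighbour of `x`; empty if the particle leaves the system. -/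
def succSite (L : ℕ) (x : Fin L) : Multiset (Fin L) :=
  if h : x.val + 1 < L then {(⟨x.val + 1, h⟩ : Fin L)} else 0

/-- Evolution of a waiting particle at `x` when `z x = 1`: the waiting particle moves to
`x+1` and the stable particle at `x` becomes a waiting particle at `x`. -/
def topple (s : State L) (x : Fin L) : State L :=
  ⟨Function.update s.z x false, s.w + succSite L x⟩

/-- Evolution of a waiting particle at `x` when `z x = 0`, settling branch (probability p). -/
def settle (s : State L) (x : Fin L) : State L :=
  ⟨Function.update s.z x true, s.w.erase x⟩

/-- Evolution of a waiting particle at `x` when `z x = 0`, jumping branch (probability q). -/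
def jump (s : State L) (x : Fin L) : State L :=
  ⟨s.z, s.w.erase x + succSite L x⟩

/-- `stabilizeAux p q R n s c` is the probability that, evolving one waiting particle at a
time (the particle being selected by the rule `R`), the process started from `s` reaches
within `n` elementary steps a stable state whose stable field is `c`. -/
noncomputable def stabilizeAux (p q : ℝ) (R : State L → Option (Fin L)) :
    ℕ → State L → (Fin L → Bool) → ℝ
  | 0, s, c => if s.w = 0 ∧ s.z = c then 1 else 0
  | n + 1, s, c =>
    match R s with
    | none => if s.z = c then 1 else 0
    | some x =>
      if s.z x then stabilizeAux p q R n (topple s x) c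
      else p * stabilizeAux p q R n (settle s x) c
        + q * stabilizeAux p q R n (jump s x) c

/-- The canonical evolution rule: evolve the leftmost waiting particle. -/
def minRule (s : State L) : Option (Fin L) :=
  if h : s.w = 0 then none
  else some (s.w.toFinset.min'
    (Finset.nonempty_iff_ne_empty.mpr (by simpa [Multiset.toFinset_eq_empty] using h)))

/-- A termination measure: the stabilization process started from `s` ends after at most
`fuel s` elementary steps, whatever the rule and the randomness. -/
def potential (s : State L) : ℕ :=
  (s.w.map fun x => L + 1 - x.val).sum + ∑ x : Fin L, (if s.z x then L + 1 - x.val else 0)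

def fuel (s : State L) : ℕ := 2 * potential s + Multiset.card s.w

/-- Add one waiting particle at site `1` (index `0`). -/
def addGrain (r : Fin L → Bool) : State L :=
  ⟨r, if h : 0 < L then {(⟨0, h⟩ : Fin L)} else 0⟩

/-- The driven-dissipative transition kernel `W` of the DSS: add a particle at site 1 and
stabilize. -/
noncomputable def Wker (p q : ℝ) (r r' : Fin L → Bool) : ℝ :=
  stabilizeAux p q minRule (fuel (addGrain r)) (addGrain r) r'

/-- `W` as a matrix on stable configurations. -/
noncomputable def Wmat (p q : ℝ) (L : ℕ) :
    Matrix (Fin L → Bool) (Fin L → Bool) ℝ :=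
  Matrix.of fun r r' => Wker p q r r'

/-- The product Bernoulli(p) measure `ψ(r) = p^(Σ r) q^(L - Σ r)`. -/
noncomputable def psi (p q : ℝ) {L : ℕ} (r : Fin L → Bool) : ℝ :=
  p ^ (Finset.univ.filter fun x => r x = true).card *
    q ^ (L - (Finset.univ.filter fun x => r x = true).card)

/-!
By the abelian property (moves of waiting particles at distinct sites commute), the outcome of
a stabilization does not depend on the order in which particles are evolved; hence the rows of
`W ^ n` are the law of stabilizing `n` particles added at site 1 all at once. Stabilizing them
site by site, each site keeps a Bernoulli(`p`) particle independently of everything before and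
passes on all its other particles, so site `x` receives at least `n - x + 1` of them. For
`n ≥ L` every site is resampled, so every row of `W ^ n` is `ψ`. Thus `ψ` is stationary, and once
`τ - 1 ≥ L` the state `z^{t+τ}` is independent of `(z^t, z^{t+1})`.
-/

@[ext]
theorem State.ext {s t : State L} (hz : s.z = t.z) (hw : s.w = t.w) : s = t := by
  cases s; cases t; congr

def siteAt (L x : ℕ) : Multiset (Fin L) :=
  if h : x < L then {⟨x, h⟩} else 0

theorem succSite_eq_siteAt (x : Fin L) : succSite L x = siteAt L (x + 1) := rfl

section Fuel

theorem card_w_le_fuel (s : State L) : Multiset.card s.w ≤ fuel s := Nat.le_add_left _ _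

theorem sum_map_succSite_le (x : Fin L) :
    ((succSite L x).map fun y : Fin L => L + 1 - y.val).sum ≤ L - x.val := by
  unfold succSite; split_ifs <;> simp

theorem card_succSite_le (x : Fin L) : Multiset.card (succSite L x) ≤ 1 := by
  unfold succSite; split_ifs <;> simp

theorem sum_ite_update_add (z : Fin L → Bool) (x : Fin L) (b : Bool) (f : Fin L → ℕ) :
    (∑ y, if Function.update z x b y then f y else 0) + (if z x then f x else 0)
      = (∑ y, if z y then f y else 0) + (if b then f x else 0) := by
  rw [← Finset.add_sum_erase _ _ (Finset.mem_univ x),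
    ← Finset.add_sum_erase _ _ (Finset.mem_univ x),
    Finset.sum_congr rfl fun y hy => by rw [Function.update_of_ne (Finset.ne_of_mem_erase hy)]]
  simp only [Function.update_self]
  ring

theorem fuel_topple_lt {s : State L} {x : Fin L} (hz : s.z x) :
    fuel (topple s x) < fuel s := by
  have hpot := sum_ite_update_add s.z x false fun y => L + 1 - y.val
  have := sum_map_succSite_le x
  have := card_succSite_le x
  have := x.isLt
  dsimp only [fuel, potential, topple]
  simp only [Multiset.map_add, Multiset.sum_add, Multiset.card_add]
  simp only [hz, if_true, Bool.false_eq_true, if_false] at hpot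
  omega

theorem fuel_settle_lt {s : State L} {x : Fin L} (hx : x ∈ s.w) :
    fuel (settle s x) < fuel s := by
  have hpot := sum_ite_update_add s.z x true fun y => L + 1 - y.val
  have := Multiset.sum_map_erase (f := fun y : Fin L => L + 1 - y.val) hx
  have := Multiset.card_erase_add_one hx
  have : (if s.z x then L + 1 - x.val else 0) ≤ L + 1 - x.val := by split_ifs <;> omega
  dsimp only [fuel, potential, settle]
  simp only [if_true] at hpot
  omega

theorem fuel_jump_lt {s : State L} {x : Fin L} (hx : x ∈ s.w) :
    fuel (jump s x) < fuel s := by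
  have := Multiset.sum_map_erase (f := fun y : Fin L => L + 1 - y.val) hx
  have := Multiset.card_erase_add_one hx
  have := sum_map_succSite_le x
  have := card_succSite_le x
  have := x.isLt
  dsimp only [fuel, potential, jump]
  simp only [Multiset.map_add, Multiset.sum_add, Multiset.card_add]
  omega

end Fuel

theorem minRule_eq_none {s : State L} (h : s.w = 0) : minRule s = none := by
  rw [minRule, dif_pos h]

theorem exists_minRule_eq_some {s : State L} (h : s.w ≠ 0) :
    ∃ y ∈ s.w, minRule s = some y := by
  rw [minRule, dif_neg h]
  exact ⟨_, Multiset.mem_toFinset.mp (Finset.min'_mem _ _), rfl⟩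

section Commute

variable {s : State L} {x y : Fin L}

theorem topple_comm (hxy : x ≠ y) : topple (topple s y) x = topple (topple s x) y := by
  ext1
  · exact Function.update_comm hxy.symm _ _ _
  · exact add_right_comm _ _ _

theorem settle_topple_comm (hxy : x ≠ y) (hx : x ∈ s.w) :
    settle (topple s y) x = topple (settle s x) y := by
  ext1
  · exact Function.update_comm hxy.symm _ _ _
  · exact Multiset.erase_add_left_pos _ hx

theorem jump_topple_comm (hx : x ∈ s.w) : jump (topple s y) x = topple (jump s x) y := by
  ext1
  · rfl
  · simp only [jump, topple, Multiset.erase_add_left_pos _ hx, add_right_comm]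

theorem settle_comm (hxy : x ≠ y) : settle (settle s y) x = settle (settle s x) y := by
  ext1
  · exact Function.update_comm hxy.symm _ _ _
  · exact Multiset.erase_comm _ _ _

theorem jump_settle_comm (hxy : x ≠ y) (hy : y ∈ s.w) :
    jump (settle s y) x = settle (jump s x) y := by
  ext1
  · rfl
  · simp only [jump, settle]
    rw [Multiset.erase_add_left_pos _ ((Multiset.mem_erase_of_ne hxy.symm).mpr hy),
      Multiset.erase_comm]

theorem jump_comm (hxy : x ≠ y) (hx : x ∈ s.w) (hy : y ∈ s.w) :
    jump (jump s y) x = jump (jump s x) y := by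
  ext1
  · rfl
  · simp only [jump]
    rw [Multiset.erase_add_left_pos _ ((Multiset.mem_erase_of_ne hxy).mpr hx),
      Multiset.erase_add_left_pos _ ((Multiset.mem_erase_of_ne hxy.symm).mpr hy),
      Multiset.erase_comm, add_right_comm]

end Commute

section Stabilize

variable {p q : ℝ}

variable (p q) in
def evolve (f : State L → ℝ) (s : State L) (x : Fin L) : ℝ :=
  if s.z x then f (topple s x) else p * f (settle s x) + q * f (jump s x)

theorem evolve_congr {f g : State L → ℝ} {s : State L} {x : Fin L} (hx : x ∈ s.w)
    (h : ∀ s', fuel s' < fuel s → (∀ y ∈ s.w, y ≠ x → y ∈ s'.w) → f s' = g s') :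
    evolve p q f s x = evolve p q g s x := by
  have hsettle : ∀ y ∈ s.w, y ≠ x → y ∈ (settle s x).w := fun y hy hyx =>
    (Multiset.mem_erase_of_ne hyx).mpr hy
  have hjump : ∀ y ∈ s.w, y ≠ x → y ∈ (jump s x).w := fun y hy hyx =>
    Multiset.mem_add.mpr (Or.inl ((Multiset.mem_erase_of_ne hyx).mpr hy))
  unfold evolve
  split_ifs with hz
  · exact h _ (fuel_topple_lt hz) fun y hy _ => Multiset.mem_add.mpr (Or.inl hy)
  · rw [h _ (fuel_settle_lt hx) hsettle, h _ (fuel_jump_lt hx) hjump]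

theorem evolve_evolve_comm (f : State L → ℝ) {s : State L} {x y : Fin L} (hxy : x ≠ y)
    (hx : x ∈ s.w) (hy : y ∈ s.w) :
    evolve p q (fun s' => evolve p q f s' x) s y
      = evolve p q (fun s' => evolve p q f s' y) s x := by
  have hzt : ∀ {u v : Fin L}, u ≠ v → (topple s v).z u = s.z u := fun h =>
    Function.update_of_ne h _ _
  have hzs : ∀ {u v : Fin L}, u ≠ v → (settle s v).z u = s.z u := fun h =>
    Function.update_of_ne h _ _
  have hzj : ∀ {u v : Fin L}, (jump s v).z u = s.z u := rfl
  simp only [evolve, hzt hxy, hzt hxy.symm, hzs hxy, hzs hxy.symm, hzj]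
  cases hzx : s.z x <;> cases hzy : s.z y <;> simp only [Bool.false_eq_true, if_true, if_false]
  · rw [settle_comm hxy, jump_settle_comm hxy hy, jump_settle_comm hxy.symm hx,
      jump_comm hxy hx hy]
    ring
  · rw [settle_topple_comm hxy hx, jump_topple_comm hx]
  · rw [settle_topple_comm hxy.symm hy, jump_topple_comm hy]
  · rw [topple_comm hxy]

theorem stabilizeAux_of_w_eq_zero {s : State L} (h : s.w = 0) (n : ℕ) (c : Fin L → Bool) :
    stabilizeAux p q minRule n s c = if s.z = c then 1 else 0 := by
  cases n with
  | zero => simp [stabilizeAux, h]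
  | succ n => rw [stabilizeAux, minRule_eq_none h]

theorem stabilizeAux_succ_of_minRule {s : State L} {y : Fin L} (h : minRule s = some y) (n : ℕ)
    (c : Fin L → Bool) :
    stabilizeAux p q minRule (n + 1) s c = evolve p q (stabilizeAux p q minRule n · c) s y := by
  rw [stabilizeAux, h]
  rfl

theorem stabilizeAux_eq_of_fuel_le {n m : ℕ} {s : State L} (hn : fuel s ≤ n) (hm : fuel s ≤ m)
    (c : Fin L → Bool) :
    stabilizeAux p q minRule n s c = stabilizeAux p q minRule m s c := by
  induction n generalizing s m with
  | zero =>
    have hw : s.w = 0 := Multiset.card_eq_zero.mp (by have := card_w_le_fuel s; omega)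
    rw [stabilizeAux_of_w_eq_zero hw, stabilizeAux_of_w_eq_zero hw]
  | succ n ih =>
    by_cases hw : s.w = 0
    · rw [stabilizeAux_of_w_eq_zero hw, stabilizeAux_of_w_eq_zero hw]
    obtain ⟨y, hy, hmin⟩ := exists_minRule_eq_some hw
    have hcard : 0 < Multiset.card s.w := Multiset.card_pos.mpr hw
    obtain ⟨m, rfl⟩ : ∃ m', m = m' + 1 :=
      Nat.exists_eq_add_one.mpr (by have := card_w_le_fuel s; omega)
    rw [stabilizeAux_succ_of_minRule hmin, stabilizeAux_succ_of_minRule hmin]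
    exact evolve_congr hy fun s' hs' _ => ih (by omega) (by omega)

variable (p q) in
/-- Every run from `s` stops within `fuel s` steps, so this is the probability that the
stabilization of `s` ends in `c`. -/
noncomputable def stabilize (s : State L) (c : Fin L → Bool) : ℝ :=
  stabilizeAux p q minRule (fuel s) s c

theorem stabilizeAux_eq_stabilize {n : ℕ} {s : State L} (h : fuel s ≤ n) (c : Fin L → Bool) :
    stabilizeAux p q minRule n s c = stabilize p q s c :=
  stabilizeAux_eq_of_fuel_le h le_rfl c

theorem stabilize_of_w_eq_zero {s : State L} (h : s.w = 0) (c : Fin L → Bool) :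
    stabilize p q s c = if s.z = c then 1 else 0 :=
  stabilizeAux_of_w_eq_zero h _ c

theorem stabilize_eq_evolve_of_minRule {s : State L} {y : Fin L} (h : minRule s = some y)
    (hy : y ∈ s.w) (c : Fin L → Bool) :
    stabilize p q s c = evolve p q (stabilize p q · c) s y := by
  obtain ⟨m, hm⟩ : ∃ m, fuel s = m + 1 := Nat.exists_eq_add_one.mpr
    (lt_of_lt_of_le (Multiset.card_pos_iff_exists_mem.mpr ⟨y, hy⟩) (card_w_le_fuel s))
  rw [stabilize, hm, stabilizeAux_succ_of_minRule h]
  exact evolve_congr hy fun s' hs' _ => stabilizeAux_eq_stabilize (by omega) c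

/-- Abelian property of the DSS. -/
theorem stabilize_eq_evolve {s : State L} {x : Fin L} (hx : x ∈ s.w) (c : Fin L → Bool) :
    stabilize p q s c = evolve p q (stabilize p q · c) s x := by
  induction hn : fuel s using Nat.strong_induction_on generalizing s x with
  | _ n ih =>
  obtain ⟨y, hy, hmin⟩ := exists_minRule_eq_some
    (Multiset.card_pos.mp (Multiset.card_pos_iff_exists_mem.mpr ⟨x, hx⟩))
  rw [stabilize_eq_evolve_of_minRule hmin hy]
  obtain rfl | hxy := eq_or_ne x y
  · rfl
  calc evolve p q (stabilize p q · c) s y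
      = evolve p q (fun s' => evolve p q (stabilize p q · c) s' x) s y :=
        evolve_congr hy fun s' hs' hw => ih _ (hn ▸ hs') (hw x hx hxy) rfl
    _ = evolve p q (fun s' => evolve p q (stabilize p q · c) s' y) s x :=
        evolve_evolve_comm _ hxy hx hy
    _ = evolve p q (stabilize p q · c) s x :=
        evolve_congr hx fun s' hs' hw => (ih _ (hn ▸ hs') (hw y hy hxy.symm) rfl).symm

theorem sum_evolve_mul {ι : Type*} [Fintype ι] (F : ι → State L → ℝ) (g : ι → ℝ) (s : State L)
    (x : Fin L) :
    ∑ i, evolve p q (F i) s x * g i = evolve p q (fun s' => ∑ i, F i s' * g i) s x := by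
  unfold evolve
  split_ifs
  · rfl
  · simp only [add_mul, Finset.sum_add_distrib, Finset.mul_sum, mul_assoc]

theorem evolve_add_w (f : State L → ℝ) {s : State L} {x : Fin L} (v : Multiset (Fin L))
    (hx : x ∈ s.w) :
    evolve p q f ⟨s.z, s.w + v⟩ x = evolve p q (fun s' => f ⟨s'.z, s'.w + v⟩) s x := by
  simp only [evolve, topple, settle, jump, Multiset.erase_add_left_pos _ hx, add_right_comm]

/-- Chapman–Kolmogorov equation for adding particles in two batches. -/
theorem sum_stabilize_mul_stabilize (s : State L) (v : Multiset (Fin L)) (c : Fin L → Bool) :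
    ∑ c', stabilize p q s c' * stabilize p q ⟨c', v⟩ c = stabilize p q ⟨s.z, s.w + v⟩ c := by
  induction hn : fuel s using Nat.strong_induction_on generalizing s with
  | _ n ih =>
  obtain hw | ⟨y, hy⟩ := (eq_or_ne s.w 0).imp_right Multiset.exists_mem_of_ne_zero
  · simp [stabilize_of_w_eq_zero hw, hw]
  calc ∑ c', stabilize p q s c' * stabilize p q ⟨c', v⟩ c
      = ∑ c', evolve p q (stabilize p q · c') s y * stabilize p q ⟨c', v⟩ c :=
        Finset.sum_congr rfl fun c' _ => by rw [stabilize_eq_evolve hy]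
    _ = evolve p q (fun s' => ∑ c', stabilize p q s' c' * stabilize p q ⟨c', v⟩ c) s y :=
        sum_evolve_mul _ _ s y
    _ = evolve p q (fun s' => stabilize p q ⟨s'.z, s'.w + v⟩ c) s y :=
        evolve_congr hy fun s' hs' _ => ih _ (hn ▸ hs') s' rfl
    _ = stabilize p q ⟨s.z, s.w + v⟩ c := by
        rw [← evolve_add_w (stabilize p q · c) v hy,
          ← stabilize_eq_evolve (Multiset.mem_add.mpr (Or.inl hy))]

end Stabilize

section Sweep

variable {p q : ℝ}

theorem stabilize_of_z_eq_true {s : State L} {x : Fin L} (hx : x ∈ s.w) (hz : s.z x = true)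
    (c : Fin L → Bool) : stabilize p q s c = stabilize p q (topple s x) c := by
  rw [stabilize_eq_evolve hx, evolve, if_pos hz]

theorem stabilize_of_z_eq_false {s : State L} {x : Fin L} (hx : x ∈ s.w) (hz : s.z x = false)
    (c : Fin L → Bool) :
    stabilize p q s c = p * stabilize p q (settle s x) c + q * stabilize p q (jump s x) c := by
  rw [stabilize_eq_evolve hx, evolve, if_neg (by simp [hz])]

/-- Of two waiting particles at an empty site, one settles and topples again, or jumps: either
way it ends up at the next site, with probability `p + q = 1`. -/
theorem stabilize_cons_cons (hpq : p + q = 1) {z : Fin L → Bool} {x : Fin L}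
    (hz : z x = false) (w : Multiset (Fin L)) (c : Fin L → Bool) :
    stabilize p q ⟨z, x ::ₘ x ::ₘ w⟩ c = stabilize p q ⟨z, x ::ₘ (w + succSite L x)⟩ c := by
  have hsettle : topple (settle ⟨z, x ::ₘ x ::ₘ w⟩ x) x = ⟨z, x ::ₘ (w + succSite L x)⟩ := by
    ext1
    · simp [settle, topple, hz]
    · simp [settle, topple]
  have hjump : jump ⟨z, x ::ₘ x ::ₘ w⟩ x = ⟨z, x ::ₘ (w + succSite L x)⟩ := by
    ext1 <;> simp [jump]
  rw [stabilize_of_z_eq_false (by simp) hz,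
    stabilize_of_z_eq_true (x := x) (by simp [settle]) (by simp [settle]), hsettle, hjump,
    ← add_mul, hpq, one_mul]

theorem stabilize_replicate_of_z_eq_false (hpq : p + q = 1) {z : Fin L → Bool} {x : Fin L}
    (hz : z x = false) (k : ℕ) (w : Multiset (Fin L)) (c : Fin L → Bool) :
    stabilize p q ⟨z, Multiset.replicate (k + 1) x + w⟩ c
      = p * stabilize p q ⟨Function.update z x true, w + k • succSite L x⟩ c
        + q * stabilize p q ⟨z, w + (k + 1) • succSite L x⟩ c := by
  induction k generalizing w with
  | zero =>
    rw [stabilize_of_z_eq_false (by simp) hz]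
    simp [settle, jump]
  | succ k ih =>
    have hpass : x ::ₘ (Multiset.replicate k x + w + succSite L x)
        = Multiset.replicate (k + 1) x + (w + succSite L x) := by
      simp [Multiset.replicate_succ, add_assoc]
    rw [Multiset.replicate_succ, Multiset.replicate_succ, Multiset.cons_add, Multiset.cons_add,
      stabilize_cons_cons hpq hz, hpass, ih]
    simp only [add_nsmul, one_nsmul, add_assoc, add_comm (succSite L x)]

/-- `k + 1` particles at `x` leave `x` occupied with probability `p` and empty with probability
`q`; all the other particles, including the stable one if `z x`, move on to the next site. -/
theorem stabilize_replicate (hpq : p + q = 1) (z : Fin L → Bool) (x : Fin L) (k : ℕ)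
    (c : Fin L → Bool) :
    stabilize p q ⟨z, Multiset.replicate (k + 1) x⟩ c
      = p * stabilize p q ⟨Function.update z x true, (k + (z x).toNat) • succSite L x⟩ c
        + q * stabilize p q
          ⟨Function.update z x false, (k + (z x).toNat + 1) • succSite L x⟩ c := by
  cases hz : z x
  · have hupdate : Function.update z x false = z := hz ▸ Function.update_eq_self x z
    simpa [hupdate] using stabilize_replicate_of_z_eq_false hpq hz k 0 c
  · have htopple : topple ⟨z, Multiset.replicate (k + 1) x⟩ x
        = ⟨Function.update z x false, Multiset.replicate (k + 1) x + succSite L x⟩ := rfl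
    rw [stabilize_of_z_eq_true (by simp) hz, htopple, stabilize_replicate_of_z_eq_false hpq
      (Function.update_self x false z), Function.update_idem]
    congr 4 <;> simp only [Bool.toNat_true, add_nsmul, one_nsmul] <;> abel

variable (p q) in
/-- The law obtained from `z` by resampling the sites `y ≥ x` independently from
Bernoulli(`p`). -/
def psiAbove (x : ℕ) (z c : Fin L → Bool) : ℝ :=
  ∏ y : Fin L, if (y : ℕ) < x then (if z y = c y then 1 else 0) else (if c y then p else q)

theorem psiAbove_of_le {x : ℕ} (hx : L ≤ x) (z c : Fin L → Bool) :
    psiAbove p q x z c = if z = c then 1 else 0 := by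
  simp [psiAbove, Finset.prod_boole, funext_iff, fun y : Fin L => y.isLt.trans_le hx]

theorem psiAbove_zero (z c : Fin L → Bool) : psiAbove p q 0 z c = psi p q c := by
  have hcard : (Finset.univ.filter fun y => ¬c y = true).card
      = L - (Finset.univ.filter fun y => c y = true).card := by
    rw [Finset.filter_not, Finset.card_sdiff_of_subset (Finset.filter_subset _ _),
      Finset.card_univ, Fintype.card_fin]
  simp only [psiAbove, Nat.not_lt_zero, if_false]
  rw [Finset.prod_ite, Finset.prod_const, Finset.prod_const, hcard, psi]

theorem psiAbove_succ (z c : Fin L → Bool) (x : Fin L) :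
    p * psiAbove p q (x + 1) (Function.update z x true) c
      + q * psiAbove p q (x + 1) (Function.update z x false) c = psiAbove p q x z c := by
  have hrest : ∀ b, ∀ y ∈ Finset.univ.erase x,
      (if (y : ℕ) < x + 1 then (if Function.update z x b y = c y then (1 : ℝ) else 0)
        else (if c y then p else q))
      = if (y : ℕ) < x then (if z y = c y then 1 else 0) else (if c y then p else q) := by
    intro b y hy
    have hyx : y ≠ x := Finset.ne_of_mem_erase hy
    have hval : (y : ℕ) ≠ x := Fin.val_ne_of_ne hyx
    rw [Function.update_of_ne hyx]
    congr 1
    exact propext ⟨fun h => by omega, fun h => by omega⟩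
  simp only [psiAbove]
  rw [← Finset.mul_prod_erase _ _ (Finset.mem_univ x),
    ← Finset.mul_prod_erase _ _ (Finset.mem_univ x),
    ← Finset.mul_prod_erase _ _ (Finset.mem_univ x), Finset.prod_congr rfl (hrest true),
    Finset.prod_congr rfl (hrest false)]
  cases c x <;> simp

/-- Each site passes on all but at most one of its incoming particles, so with `L - x` particles
at `x` every later site receives at least one and is resampled. -/
theorem stabilize_nsmul_siteAt (hpq : p + q = 1) {x k : ℕ} (hk : L - x ≤ k)
    (z c : Fin L → Bool) :
    stabilize p q ⟨z, k • siteAt L x⟩ c = psiAbove p q x z c := by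
  induction hd : L - x generalizing x k z with
  | zero =>
    have hsite : siteAt L x = 0 := dif_neg (by omega)
    rw [hsite, nsmul_zero, stabilize_of_w_eq_zero rfl, psiAbove_of_le (by omega)]
  | succ d ih =>
    have hx : x < L := by omega
    obtain ⟨k, rfl⟩ : ∃ k', k = k' + 1 := Nat.exists_eq_add_one.mpr (by omega)
    have hsite : (k + 1) • siteAt L x = Multiset.replicate (k + 1) ⟨x, hx⟩ := by
      rw [siteAt, dif_pos hx, Multiset.nsmul_singleton]
    rw [hsite, stabilize_replicate hpq, succSite_eq_siteAt, Fin.val_mk,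
      ih (by omega) _ (by omega), ih (by omega) _ (by omega)]
    exact psiAbove_succ z c ⟨x, hx⟩

end Sweep

section Kernel

variable {p q : ℝ}

theorem Wmat_apply (r c : Fin L → Bool) :
    Wmat p q L r c = stabilize p q ⟨r, siteAt L 0⟩ c := rfl

theorem Wmat_pow_apply (n : ℕ) (r c : Fin L → Bool) :
    (Wmat p q L ^ n) r c = stabilize p q ⟨r, n • siteAt L 0⟩ c := by
  induction n generalizing c with
  | zero =>
    rw [pow_zero, zero_nsmul, stabilize_of_w_eq_zero rfl, Matrix.one_apply]
  | succ n ih =>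
    simp only [pow_succ, Matrix.mul_apply, ih, Wmat_apply, succ_nsmul]
    exact sum_stabilize_mul_stabilize _ _ c

theorem Wmat_pow_apply_of_le (hpq : p + q = 1) {n : ℕ} (hn : L ≤ n) (r c : Fin L → Bool) :
    (Wmat p q L ^ n) r c = psi p q c := by
  rw [Wmat_pow_apply, stabilize_nsmul_siteAt hpq (by omega), psiAbove_zero]

theorem sum_psi_mul_Wmat_pow (hpq : p + q = 1) (t : ℕ) (c : Fin L → Bool) :
    ∑ r, psi p q r * (Wmat p q L ^ t) r c = psi p q c := by
  let r₀ : Fin L → Bool := fun _ => false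
  calc ∑ r, psi p q r * (Wmat p q L ^ t) r c
      = ∑ r, (Wmat p q L ^ L) r₀ r * (Wmat p q L ^ t) r c := by
        simp only [Wmat_pow_apply_of_le hpq le_rfl]
    _ = (Wmat p q L ^ (L + t)) r₀ c := by rw [pow_add, Matrix.mul_apply]
    _ = psi p q c := Wmat_pow_apply_of_le hpq (Nat.le_add_right L t) r₀ c

end Kernel

theorem transport_observables_decorrelate_general
    (L : ℕ) (p q : ℝ) (hpq : p + q = 1)
    (A : (Fin L → Bool) → (Fin L → Bool) → ℝ) (t τ : ℕ) (hτ : L + 1 ≤ τ) :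
    (∑ r0 : Fin L → Bool, ∑ r1 : Fin L → Bool, ∑ r2 : Fin L → Bool,
      ∑ r3 : Fin L → Bool, ∑ r4 : Fin L → Bool,
        psi p q r0 * ((Wmat p q L) ^ t) r0 r1 * Wker p q r1 r2 * A r1 r2 *
          ((Wmat p q L) ^ (τ - 1)) r2 r3 * Wker p q r3 r4 * A r3 r4)
      =
    (∑ r0 : Fin L → Bool, ∑ r1 : Fin L → Bool, ∑ r2 : Fin L → Bool,
        psi p q r0 * ((Wmat p q L) ^ t) r0 r1 * Wker p q r1 r2 * A r1 r2) *
    (∑ r0 : Fin L → Bool, ∑ r1 : Fin L → Bool, ∑ r2 : Fin L → Bool,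
        psi p q r0 * ((Wmat p q L) ^ (t + τ)) r0 r1 * Wker p q r1 r2 * A r1 r2) := by
  have hmix : ∀ r r', (Wmat p q L ^ (τ - 1)) r r' = psi p q r' :=
    Wmat_pow_apply_of_le hpq (by omega)
  have hmean : ∀ u, (∑ r0 : Fin L → Bool, ∑ r1 : Fin L → Bool, ∑ r2 : Fin L → Bool,
        psi p q r0 * ((Wmat p q L) ^ u) r0 r1 * Wker p q r1 r2 * A r1 r2)
      = ∑ r1 : Fin L → Bool, ∑ r2 : Fin L → Bool, psi p q r1 * Wker p q r1 r2 * A r1 r2 := by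
    intro u
    rw [Finset.sum_comm]
    refine Finset.sum_congr rfl fun r1 _ => ?_
    rw [Finset.sum_comm]
    simp only [← Finset.sum_mul, sum_psi_mul_Wmat_pow hpq]
  rw [hmean (t + τ)]
  simp only [hmix, Finset.sum_mul]
  simp only [Finset.mul_sum, mul_assoc]

/-- finite-time decorrelation of transport observables. For any function
`A` of two successive states, any `t ≥ 0` and any `τ ≥ L+1`, in the stationary process
`E[A(z^t,z^{t+1}) A(z^{t+τ},z^{t+τ+1})] = E[A(z^t,z^{t+1})] E[A(z^{t+τ},z^{t+τ+1})]`. -/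
theorem transport_observables_decorrelate
    (L : ℕ) (hL : 0 < L) (p q : ℝ) (hp : 0 < p) (hq : 0 < q) (hpq : p + q = 1)
    (A : (Fin L → Bool) → (Fin L → Bool) → ℝ) (t τ : ℕ) (hτ : L + 1 ≤ τ) :
    (∑ r0 : Fin L → Bool, ∑ r1 : Fin L → Bool, ∑ r2 : Fin L → Bool,
      ∑ r3 : Fin L → Bool, ∑ r4 : Fin L → Bool,
        psi p q r0 * ((Wmat p q L) ^ t) r0 r1 * Wker p q r1 r2 * A r1 r2 *
          ((Wmat p q L) ^ (τ - 1)) r2 r3 * Wker p q r3 r4 * A r3 r4)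
      =
    (∑ r0 : Fin L → Bool, ∑ r1 : Fin L → Bool, ∑ r2 : Fin L → Bool,
        psi p q r0 * ((Wmat p q L) ^ t) r0 r1 * Wker p q r1 r2 * A r1 r2) *
    (∑ r0 : Fin L → Bool, ∑ r1 : Fin L → Bool, ∑ r2 : Fin L → Bool,
        psi p q r0 * ((Wmat p q L) ^ (t + τ)) r0 r1 * Wker p q r1 r2 * A r1 r2) :=
  transport_observables_decorrelate_general L p q hpq A t τ hτ

end DSS
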